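/- Let U and W be finite-dimensional complex vector spaces, α ∈ U and β ∈ W nonzero, and p, q ≥ 0. Consider the cochain complex T with T^k = ⊕_{r+s=k, r≥p, s≥q} Λ^r U ⊗ Λ^s W and differential D acting on the component of bidegree (r,s) by L_α + (−1)^r L_β. Then D∘D = 0 and H^k(T) = 0 for every k ≥ p+q+1, i.e. T is exact in all degrees strictly above its bottom degree p+q. -/

import Mathlib

open scoped TensorProduct

variable {U W : Type} [AddCommGroup U] [Module ℂ U] [AddCommGroup W] [Module ℂ W]

/-- Left wedge multiplication `L_α = α ∧ -` on exterior powers. -/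
noncomputable def Lmul (α : U) (a : ℕ) : ⋀[ℂ]^a U →ₗ[ℂ] ⋀[ℂ]^(a + 1) U :=
  (LinearMap.mulLeft ℂ (ExteriorAlgebra.ι ℂ α)).restrict fun x hx => by
    have h1 : ExteriorAlgebra.ι ℂ α ∈ ⋀[ℂ]^1 U := by
      show ExteriorAlgebra.ι ℂ α ∈ LinearMap.range (ExteriorAlgebra.ι ℂ (M := U)) ^ 1
      rw [pow_one]; exact LinearMap.mem_range_self _ α
    exact (Nat.add_comm 1 a) ▸ SetLike.mul_mem_graded h1 hx

lemma Lmul_Lmul (α : U) (a : ℕ) (x : ⋀[ℂ]^a U) :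
    Lmul α (a + 1) (Lmul α a x) = 0 := by
  apply Subtype.ext
  show ExteriorAlgebra.ι ℂ α * (ExteriorAlgebra.ι ℂ α * (x : ExteriorAlgebra ℂ U)) = 0
  rw [← mul_assoc, ExteriorAlgebra.ι_sq_zero, zero_mul]

/-- `BX U W r s = Λ^r U ⊗ Λ^s W` for `r, s ≥ 0`, and the zero space otherwise. -/
noncomputable def BX (U W : Type) [AddCommGroup U] [Module ℂ U] [AddCommGroup W] [Module ℂ W] :
    ℤ → ℤ → Type
  | Int.ofNat a, Int.ofNat b => ⋀[ℂ]^a U ⊗[ℂ] ⋀[ℂ]^b W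
  | Int.ofNat _, Int.negSucc _ => PUnit
  | Int.negSucc _, _ => PUnit

noncomputable instance : ∀ r s, AddCommGroup (BX U W r s)
  | Int.ofNat a, Int.ofNat b => inferInstanceAs (AddCommGroup (⋀[ℂ]^a U ⊗[ℂ] ⋀[ℂ]^b W))
  | Int.ofNat _, Int.negSucc _ => inferInstanceAs (AddCommGroup PUnit)
  | Int.negSucc _, Int.ofNat _ => inferInstanceAs (AddCommGroup PUnit)
  | Int.negSucc _, Int.negSucc _ => inferInstanceAs (AddCommGroup PUnit)

noncomputable instance : ∀ r s, Module ℂ (BX U W r s)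
  | Int.ofNat a, Int.ofNat b => inferInstanceAs (Module ℂ (⋀[ℂ]^a U ⊗[ℂ] ⋀[ℂ]^b W))
  | Int.ofNat _, Int.negSucc _ => inferInstanceAs (Module ℂ PUnit)
  | Int.negSucc _, Int.ofNat _ => inferInstanceAs (Module ℂ PUnit)
  | Int.negSucc _, Int.negSucc _ => inferInstanceAs (Module ℂ PUnit)

/-- The operator `L_α = (α ∧ -) ⊗ id` on `BX U W`. -/
noncomputable def Bd1 (α : U) : ∀ r s, BX U W r s →ₗ[ℂ] BX U W (r + 1) s
  | Int.ofNat a, Int.ofNat b => TensorProduct.map (Lmul α a) (LinearMap.id (M := ⋀[ℂ]^b W))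
  | Int.ofNat _, Int.negSucc _ => 0
  | Int.negSucc _, _ => 0

/-- The operator `L_β = id ⊗ (β ∧ -)` on `BX U W`. -/
noncomputable def Bd2u (β : W) : ∀ r s, BX U W r s →ₗ[ℂ] BX U W r (s + 1)
  | Int.ofNat a, Int.ofNat b => TensorProduct.map (LinearMap.id (M := ⋀[ℂ]^a U)) (Lmul β b)
  | Int.ofNat _, Int.negSucc _ => 0
  | Int.negSucc _, _ => 0

/-- The signed operator `(-1)^r L_β = (-1)^r (id ⊗ (β ∧ -))` on `BX U W`. -/
noncomputable def Bd2s (β : W) : ∀ r s, BX U W r s →ₗ[ℂ] BX U W r (s + 1)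
  | Int.ofNat a, Int.ofNat b =>
      ((-1 : ℂ) ^ a) • TensorProduct.map (LinearMap.id (M := ⋀[ℂ]^a U)) (Lmul β b)
  | Int.ofNat _, Int.negSucc _ => 0
  | Int.negSucc _, _ => 0

/-- Transport of `BX` along equalities of the indices. -/
noncomputable def BXcast {r s r' s' : ℤ} (h1 : r = r') (h2 : s = s') :
    BX U W r s ≃ₗ[ℂ] BX U W r' s' := by
  subst h1; subst h2; exact LinearEquiv.refl ℂ _

open DirectSum

/-- Index set for degree `k` of the complex `T`: bidegrees `(r,s)` with `r+s = k`,
`r ≥ p`, `s ≥ q`. -/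
abbrev TIdx (p q k : ℤ) := {rs : ℤ × ℤ // rs.1 + rs.2 = k ∧ p ≤ rs.1 ∧ q ≤ rs.2}

/-- The degree-`k` piece `T^k = ⊕_{r+s=k, r≥p, s≥q} Λ^r U ⊗ Λ^s W`. -/
noncomputable abbrev TL (U W : Type) [AddCommGroup U] [Module ℂ U] [AddCommGroup W]
    [Module ℂ W] (p q k : ℤ) : Type :=
  ⨁ i : TIdx p q k, BX U W i.1.1 i.1.2

/-- The differential `D` of `T`, acting on the component of bidegree `(r,s)` by
`L_α + (-1)^r L_β`. -/
noncomputable def TD {U W : Type} [AddCommGroup U] [Module ℂ U] [AddCommGroup W]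
    [Module ℂ W] (α : U) (β : W) (p q k : ℤ) :
    TL U W p q k →ₗ[ℂ] TL U W p q (k + 1) :=
  DirectSum.toModule ℂ _ _ fun i =>
    ((DirectSum.lof ℂ (TIdx p q (k + 1)) (fun j => BX U W j.1.1 j.1.2)
        ⟨(i.1.1 + 1, i.1.2), by have h := i.2; dsimp only at h ⊢; omega⟩).comp
      (Bd1 α i.1.1 i.1.2))
    +
    ((DirectSum.lof ℂ (TIdx p q (k + 1)) (fun j => BX U W j.1.1 j.1.2)
        ⟨(i.1.1, i.1.2 + 1), by have h := i.2; dsimp only at h ⊢; omega⟩).comp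
      (Bd2s β i.1.1 i.1.2))

/-- Transport of the pieces of `T` along an equality of degrees. -/
noncomputable def TLcast (U W : Type) [AddCommGroup U] [Module ℂ U] [AddCommGroup W] [Module ℂ W]
    (p q : ℤ) {k k' : ℤ} (h : k = k') : TL U W p q k ≃ₗ[ℂ] TL U W p q k' := by
  subst h; exact LinearEquiv.refl ℂ _

/-! Pick `f` with `f α = 1`. Contraction `ι_f` satisfies `L_α ι_f + ι_f L_α = id` and
anticommutes with `(-1)^r L_β`, so applying `ι_f ⊗ id` on every row `r > p` is a homotopy with
`D h + h D = id - E`, where `E` is supported on the bottom row `r = p`. A cocycle `x` is therefore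
cohomologous to a cocycle `w` of bidegree `(p, k - p)`, i.e. `L_α w = L_β w = 0`. With `g β = 1`,
contraction in the second factor gives `w = L_β (ι_g w)`, and `ι_g w` is still killed by `L_α`;
it lies in `T^(k-1)` exactly when `k - p - 1 ≥ q`. -/

namespace ExteriorAlgebra

variable {R M : Type*} [CommRing R] [AddCommGroup M] [Module R M]

theorem ι_mul_mem_exteriorPower (m : M) {n : ℕ} {x : ExteriorAlgebra R M}
    (hx : x ∈ ⋀[R]^n M) : ι R m * x ∈ ⋀[R]^(n + 1) M := by
  change _ ∈ LinearMap.range (ι R) ^ (n + 1)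
  rw [pow_succ']
  exact Submodule.mul_mem_mul (LinearMap.mem_range_self _ m) hx

open CliffordAlgebra in
theorem contractLeft_mem_exteriorPower (f : Module.Dual R M) {n : ℕ} {x : ExteriorAlgebra R M}
    (hx : x ∈ ⋀[R]^(n + 1) M) : contractLeft (Q := 0) f x ∈ ⋀[R]^n M := by
  change x ∈ LinearMap.range (ι R) ^ (n + 1) at hx
  induction n generalizing x with
  | zero =>
    obtain ⟨u, rfl⟩ := (pow_one (LinearMap.range (ι R (M := M))) ▸ hx :)
    rw [contractLeft_ι]
    exact Submodule.algebraMap_mem _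
  | succ n ih =>
    rw [pow_succ'] at hx
    induction hx using Submodule.mul_induction_on' with
    | mem_mul_mem m hm y hy =>
      obtain ⟨u, rfl⟩ := hm
      rw [contractLeft_ι_mul]
      exact sub_mem (Submodule.smul_mem _ _ hy) (ι_mul_mem_exteriorPower u (ih hy))
    | add x y _ _ hx hy => rw [map_add]; exact add_mem hx hy

end ExteriorAlgebra

theorem DirectSum.lof_add_lof_eq_zero_iff {R ι : Type*} [Semiring R] [DecidableEq ι]
    {M : ι → Type*} [∀ i, AddCommMonoid (M i)] [∀ i, Module R (M i)] {i j : ι} (hij : i ≠ j)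
    (x : M i) (y : M j) : lof R ι M i x + lof R ι M j y = 0 ↔ x = 0 ∧ y = 0 := by
  refine ⟨fun h => ⟨?_, ?_⟩, fun ⟨hx, hy⟩ => by rw [hx, hy, map_zero, map_zero, add_zero]⟩
  · simpa [component.of, hij.symm] using congrArg (component R ι M i) h
  · simpa [component.of, hij] using congrArg (component R ι M j) h

noncomputable def Lcon (f : Module.Dual ℂ U) (a : ℕ) : ⋀[ℂ]^(a + 1) U →ₗ[ℂ] ⋀[ℂ]^a U :=
  (CliffordAlgebra.contractLeft (Q := 0) f).restrict fun _ =>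
    ExteriorAlgebra.contractLeft_mem_exteriorPower f

theorem Lmul_comp_Lmul (α : U) (a : ℕ) : Lmul α (a + 1) ∘ₗ Lmul α a = 0 :=
  LinearMap.ext (Lmul_Lmul α a)

theorem Lcon_comp_Lmul_add_Lmul_comp_Lcon (f : Module.Dual ℂ U) (α : U) (a : ℕ) :
    Lcon f (a + 1) ∘ₗ Lmul α (a + 1) + Lmul α a ∘ₗ Lcon f a = f α • LinearMap.id := by
  refine LinearMap.ext fun x => Subtype.ext ?_
  change CliffordAlgebra.contractLeft f (ExteriorAlgebra.ι ℂ α * (x : ExteriorAlgebra ℂ U))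
      + ExteriorAlgebra.ι ℂ α * CliffordAlgebra.contractLeft f (x : ExteriorAlgebra ℂ U)
      = f α • (x : ExteriorAlgebra ℂ U)
  rw [CliffordAlgebra.contractLeft_ι_mul]
  abel

noncomputable def Bcon1 (f : Module.Dual ℂ U) : ∀ r s, BX U W (r + 1) s →ₗ[ℂ] BX U W r s
  | Int.ofNat a, Int.ofNat b => (Lcon f a).rTensor (⋀[ℂ]^b W)
  | _, _ => 0

noncomputable def Bcon2 (g : Module.Dual ℂ W) : ∀ r s, BX U W r (s + 1) →ₗ[ℂ] BX U W r s
  | Int.ofNat a, Int.ofNat b => (Lcon g b).lTensor (⋀[ℂ]^a U)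
  | _, _ => 0

section NatIndices

variable {a b : ℕ}

theorem Bd1_Bd1 (α : U) (x : BX U W a b) : Bd1 α (a + 1) b (Bd1 α a b x) = 0 :=
  LinearMap.congr_fun (show (Lmul α (a + 1)).rTensor _ ∘ₗ (Lmul α a).rTensor (⋀[ℂ]^b W) = 0 by
    rw [← LinearMap.rTensor_comp, Lmul_comp_Lmul, LinearMap.rTensor_zero]) x

theorem Bd2s_Bd2s (β : W) (x : BX U W a b) : Bd2s β a (b + 1) (Bd2s β a b x) = 0 :=
  LinearMap.congr_fun (show ((-1 : ℂ) ^ a • (Lmul β (b + 1)).lTensor _) ∘ₗ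
      ((-1 : ℂ) ^ a • (Lmul β b).lTensor (⋀[ℂ]^a U)) = 0 by
    rw [LinearMap.smul_comp, LinearMap.comp_smul, ← LinearMap.lTensor_comp, Lmul_comp_Lmul,
      LinearMap.lTensor_zero, smul_zero, smul_zero]) x

theorem Bd2s_Bd1_add_Bd1_Bd2s (α : U) (β : W) (x : BX U W a b) :
    Bd2s β (a + 1) b (Bd1 α a b x) + Bd1 α a (b + 1) (Bd2s β a b x) = 0 :=
  LinearMap.congr_fun (show ((-1 : ℂ) ^ (a + 1) • (Lmul β b).lTensor _) ∘ₗ (Lmul α a).rTensor _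
      + (Lmul α a).rTensor _ ∘ₗ ((-1 : ℂ) ^ a • (Lmul β b).lTensor (⋀[ℂ]^a U)) = 0 by
    rw [LinearMap.smul_comp, LinearMap.comp_smul, LinearMap.lTensor_comp_rTensor,
      LinearMap.rTensor_comp_lTensor]
    module) x

theorem Bd1_Bcon1_add_Bcon1_Bd1 (f : Module.Dual ℂ U) (α : U) (hf : f α = 1)
    (x : BX U W (a + 1) b) :
    Bd1 α a b (Bcon1 f a b x) + Bcon1 f (a + 1) b (Bd1 α (a + 1) b x) = x :=
  LinearMap.congr_fun (show (Lmul α a).rTensor _ ∘ₗ (Lcon f a).rTensor (⋀[ℂ]^b W)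
      + (Lcon f (a + 1)).rTensor _ ∘ₗ (Lmul α (a + 1)).rTensor _ = LinearMap.id by
    rw [← LinearMap.rTensor_comp, ← LinearMap.rTensor_comp, ← LinearMap.rTensor_add,
      add_comm (Lmul α a ∘ₗ _), Lcon_comp_Lmul_add_Lmul_comp_Lcon, hf, one_smul,
      LinearMap.rTensor_id]) x

theorem Bd2s_Bcon1_add_Bcon1_Bd2s (f : Module.Dual ℂ U) (β : W) (x : BX U W (a + 1) b) :
    Bd2s β a b (Bcon1 f a b x) + Bcon1 f a (b + 1) (Bd2s β (a + 1) b x) = 0 :=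
  LinearMap.congr_fun (show ((-1 : ℂ) ^ a • (Lmul β b).lTensor _) ∘ₗ (Lcon f a).rTensor (⋀[ℂ]^b W)
      + (Lcon f a).rTensor _ ∘ₗ ((-1 : ℂ) ^ (a + 1) • (Lmul β b).lTensor _) = 0 by
    rw [LinearMap.smul_comp, LinearMap.comp_smul, LinearMap.lTensor_comp_rTensor,
      LinearMap.rTensor_comp_lTensor]
    module) x

theorem Bcon2_Bd2u_add_Bd2u_Bcon2 (g : Module.Dual ℂ W) (β : W) (hg : g β = 1)
    (x : BX U W a (b + 1)) :
    Bcon2 g a (b + 1) (Bd2u β a (b + 1) x) + Bd2u β a b (Bcon2 g a b x) = x :=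
  LinearMap.congr_fun (show (Lcon g (b + 1)).lTensor _ ∘ₗ (Lmul β (b + 1)).lTensor _
      + (Lmul β b).lTensor _ ∘ₗ (Lcon g b).lTensor (⋀[ℂ]^a U) = LinearMap.id by
    rw [← LinearMap.lTensor_comp, ← LinearMap.lTensor_comp, ← LinearMap.lTensor_add,
      Lcon_comp_Lmul_add_Lmul_comp_Lcon, hg, one_smul, LinearMap.lTensor_id]) x

theorem Bd1_Bcon2 (α : U) (g : Module.Dual ℂ W) (x : BX U W a (b + 1)) :
    Bd1 α a b (Bcon2 g a b x) = Bcon2 g (a + 1) b (Bd1 α a (b + 1) x) :=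
  LinearMap.congr_fun (show (Lmul α a).rTensor _ ∘ₗ (Lcon g b).lTensor (⋀[ℂ]^a U)
      = (Lcon g b).lTensor _ ∘ₗ (Lmul α a).rTensor _ by
    rw [LinearMap.rTensor_comp_lTensor, LinearMap.lTensor_comp_rTensor]) x

end NatIndices

theorem Bd2s_eq_smul_Bd2u (β : W) (a : ℕ) (s : ℤ) (x : BX U W a s) :
    Bd2s β a s x = (-1 : ℂ) ^ a • Bd2u β a s x := by
  rcases s with b | b
  · rfl
  · exact (smul_zero _).symm

theorem exists_Bd1_eq_zero_and_Bd2s_eq (α : U) (β : W) (hβ : β ≠ 0) {a b : ℕ}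
    {w : BX U W a (b + 1)} (h1 : Bd1 α a (b + 1) w = 0) (h2 : Bd2s β a (b + 1) w = 0) :
    ∃ u : BX U W a b, Bd1 α a b u = 0 ∧ Bd2s β a b u = w := by
  obtain ⟨g, hg⟩ := Module.Projective.exists_dual_eq_one ℂ hβ
  have hw : Bd2u β a (b + 1) w = 0 := by
    rw [Bd2s_eq_smul_Bd2u] at h2
    exact (smul_eq_zero_iff_right (pow_ne_zero _ (neg_ne_zero.mpr one_ne_zero))).mp h2
  have hcon := Bcon2_Bd2u_add_Bd2u_Bcon2 g β hg w
  rw [hw, map_zero, zero_add] at hcon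
  refine ⟨(-1 : ℂ) ^ a • Bcon2 g a b w, ?_, ?_⟩
  · rw [map_smul, Bd1_Bcon2, h1, map_zero, smul_zero]
  · rw [map_smul, Bd2s_eq_smul_Bd2u, smul_smul, ← mul_pow, neg_one_mul, neg_neg, one_pow,
      one_smul, hcon]

section Complex

variable {p q k : ℤ}

noncomputable def Tcon (f : Module.Dual ℂ U) (p q k : ℤ) :
    TL U W p q (k + 1) →ₗ[ℂ] TL U W p q k :=
  toModule ℂ _ _ fun i =>
    if h : p + 1 ≤ i.1.1 then
      lof ℂ _ _ ⟨(i.1.1 - 1, i.1.2), by have := i.2; dsimp only at this ⊢; omega⟩ ∘ₗ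
        Bcon1 f (i.1.1 - 1) i.1.2 ∘ₗ (BXcast (by omega) rfl).toLinearMap
    else 0

noncomputable def Tbot (f : Module.Dual ℂ U) (α : U) (p q k : ℤ) :
    TL U W p q k →ₗ[ℂ] TL U W p q k :=
  toModule ℂ _ _ fun i =>
    if i.1.1 = p then
      lof ℂ _ _ i ∘ₗ (LinearMap.id - Bcon1 f i.1.1 i.1.2 ∘ₗ Bd1 α i.1.1 i.1.2)
    else 0

theorem TD_lof (α : U) (β : W) {r s : ℤ} (h : r + s = k ∧ p ≤ r ∧ q ≤ s) (v : BX U W r s) :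
    TD α β p q k (lof ℂ _ _ ⟨(r, s), h⟩ v) =
      lof ℂ _ _ ⟨(r + 1, s), by omega⟩ (Bd1 α r s v) +
        lof ℂ _ _ ⟨(r, s + 1), by omega⟩ (Bd2s β r s v) := by
  simp [TD]

theorem Tcon_lof_of_le (f : Module.Dual ℂ U) {r s : ℤ} (hr : r ≤ p)
    (h : r + s = k + 1 ∧ p ≤ r ∧ q ≤ s) (v : BX U W r s) :
    Tcon f p q k (lof ℂ _ _ ⟨(r, s), h⟩ v) = 0 := by
  simp [Tcon, hr.not_gt]

theorem Tcon_lof_succ (f : Module.Dual ℂ U) {r s : ℤ} (hr : p ≤ r)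
    (h : r + 1 + s = k + 1 ∧ p ≤ r + 1 ∧ q ≤ s) (v : BX U W (r + 1) s) :
    Tcon f p q k (lof ℂ _ _ ⟨(r + 1, s), h⟩ v) = lof ℂ _ _ ⟨(r, s), by omega⟩ (Bcon1 f r s v) := by
  simp only [Tcon, toModule_lof, dif_pos (show p + 1 ≤ r + 1 by omega), LinearMap.comp_apply,
    LinearEquiv.coe_coe]
  -- `Tcon` lands in the index `(r + 1 - 1, s)`; generalizing it lets `rfl` remove the cast.
  have key : ∀ t (ht : r = t) (e : r + 1 = t + 1) (h' : t + s = k ∧ p ≤ t ∧ q ≤ s),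
      lof ℂ _ _ ⟨(t, s), h'⟩ (Bcon1 f t s (BXcast e rfl v)) =
        lof ℂ (TIdx p q k) (fun j => BX U W j.1.1 j.1.2) ⟨(r, s), by omega⟩ (Bcon1 f r s v) := by
    rintro t rfl e h'
    rfl
  exact key _ (by omega) _ _

theorem Tbot_lof_self (f : Module.Dual ℂ U) (α : U) {s : ℤ} (h : p + s = k ∧ p ≤ p ∧ q ≤ s)
    (v : BX U W p s) :
    Tbot f α p q k (lof ℂ _ _ ⟨(p, s), h⟩ v) =
      lof ℂ _ _ ⟨(p, s), h⟩ (v - Bcon1 f p s (Bd1 α p s v)) := by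
  simp [Tbot]

theorem Tbot_lof_of_ne (f : Module.Dual ℂ U) (α : U) {r s : ℤ} (hr : r ≠ p)
    (h : r + s = k ∧ p ≤ r ∧ q ≤ s) (v : BX U W r s) :
    Tbot f α p q k (lof ℂ _ _ ⟨(r, s), h⟩ v) = 0 := by
  simp [Tbot, hr]

theorem TD_TD (hp : 0 ≤ p) (hq : 0 ≤ q) (α : U) (β : W) (x : TL U W p q k) :
    TD α β p q (k + 1) (TD α β p q k x) = 0 := by
  induction x using DirectSum.induction_on with
  | zero => simp
  | add x y hx hy => rw [map_add, map_add, hx, hy, add_zero]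
  | of i v =>
    obtain ⟨⟨r, s⟩, h⟩ := i
    lift r to ℕ using (by omega)
    lift s to ℕ using (by omega)
    rw [← lof_eq_of ℂ, TD_lof, map_add, TD_lof, TD_lof, Bd1_Bd1, Bd2s_Bd2s, map_zero, map_zero,
      zero_add, add_zero, ← map_add, Bd2s_Bd1_add_Bd1_Bd2s, map_zero]

theorem TD_Tcon_add_Tcon_TD (hp : 0 ≤ p) (hq : 0 ≤ q) (f : Module.Dual ℂ U) (α : U) (β : W)
    (hf : f α = 1) (x : TL U W p q (k + 1)) :
    TD α β p q k (Tcon f p q k x) + Tcon f p q (k + 1) (TD α β p q (k + 1) x) =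
      x - Tbot f α p q (k + 1) x := by
  induction x using DirectSum.induction_on with
  | zero => simp
  | add x y hx hy =>
    simp only [map_add]
    rw [add_add_add_comm, hx, hy]
    abel
  | of i v =>
    obtain ⟨⟨r, s⟩, h⟩ := i
    rw [← lof_eq_of ℂ]
    obtain rfl | hr := (show r = p ∨ p + 1 ≤ r by omega)
    · rw [Tcon_lof_of_le f le_rfl, map_zero, zero_add, TD_lof, map_add, Tcon_lof_succ f le_rfl,
        Tcon_lof_of_le f le_rfl, add_zero, Tbot_lof_self, map_sub, sub_sub_cancel]
    · obtain ⟨r, rfl⟩ : ∃ r', r = r' + 1 := ⟨r - 1, by omega⟩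
      lift r to ℕ using (by omega)
      lift s to ℕ using (by omega)
      rw [Tcon_lof_succ f (by omega), TD_lof, TD_lof, map_add, Tcon_lof_succ f (by omega),
        Tcon_lof_succ f (by omega), Tbot_lof_of_ne f α (by omega), sub_zero, add_add_add_comm,
        ← map_add, ← map_add, Bd1_Bcon1_add_Bcon1_Bd1 f α hf, Bd2s_Bcon1_add_Bcon1_Bd2s,
        map_zero, add_zero]

theorem exists_Tbot_eq_lof (f : Module.Dual ℂ U) (α : U) {s : ℤ}
    (h : p + s = k ∧ p ≤ p ∧ q ≤ s) (x : TL U W p q k) :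
    ∃ w, Tbot f α p q k x = lof ℂ _ _ ⟨(p, s), h⟩ w := by
  induction x using DirectSum.induction_on with
  | zero => exact ⟨0, by rw [map_zero, map_zero]⟩
  | add x y hx hy =>
    obtain ⟨w₁, hw₁⟩ := hx
    obtain ⟨w₂, hw₂⟩ := hy
    exact ⟨w₁ + w₂, by rw [map_add, hw₁, hw₂, map_add]⟩
  | of i v =>
    obtain ⟨⟨r, s'⟩, h'⟩ := i
    rw [← lof_eq_of ℂ]
    by_cases hr : r = p
    · subst hr
      obtain rfl : s' = s := by omega
      exact ⟨_, Tbot_lof_self f α h v⟩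
    · exact ⟨0, by rw [Tbot_lof_of_ne f α hr, map_zero]⟩

theorem exists_TD_eq_lof (hp : 0 ≤ p) (hq : 0 ≤ q) (α : U) (β : W) (hβ : β ≠ 0) {s : ℤ}
    (hs : q ≤ s) (h : p + (s + 1) = k + 1 ∧ p ≤ p ∧ q ≤ s + 1) (w : BX U W p (s + 1))
    (hw : TD α β p q (k + 1) (lof ℂ _ _ ⟨(p, s + 1), h⟩ w) = 0) :
    ∃ y, TD α β p q k y = lof ℂ _ _ ⟨(p, s + 1), h⟩ w := by
  rw [TD_lof, lof_add_lof_eq_zero_iff (by simp)] at hw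
  lift p to ℕ using hp
  lift s to ℕ using (by omega)
  obtain ⟨u, hu₁, hu₂⟩ := exists_Bd1_eq_zero_and_Bd2s_eq α β hβ hw.1 hw.2
  exact ⟨lof ℂ _ _ ⟨(p, s), by omega⟩ u, by rw [TD_lof, hu₁, hu₂, map_zero, zero_add]⟩

theorem exists_TD_eq_of_TD_eq_zero (hp : 0 ≤ p) (hq : 0 ≤ q) (α : U) (β : W) (hα : α ≠ 0)
    (hβ : β ≠ 0) (hk : p + q ≤ k) (x : TL U W p q (k + 1)) (hx : TD α β p q (k + 1) x = 0) :
    ∃ y, TD α β p q k y = x := by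
  obtain ⟨f, hf⟩ := Module.Projective.exists_dual_eq_one ℂ hα
  have hhom := TD_Tcon_add_Tcon_TD hp hq f α β hf x
  rw [hx, map_zero, add_zero] at hhom
  obtain ⟨w, hw⟩ := exists_Tbot_eq_lof f α (s := k - p + 1) (by omega) x
  have hw_closed : TD α β p q (k + 1) (lof ℂ _ _ _ w) = 0 := by
    rw [← hw, show Tbot f α p q (k + 1) x = x - TD α β p q k (Tcon f p q k x) by
      rw [hhom, sub_sub_cancel], map_sub, hx, TD_TD hp hq, sub_zero]
  obtain ⟨y, hy⟩ := exists_TD_eq_lof hp hq α β hβ (by omega) _ w hw_closed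
  exact ⟨Tcon f p q k x + y, by rw [map_add, hhom, hy, ← hw, sub_add_cancel]⟩

end Complex

theorem TLcast_TD_TLcast (α : U) (β : W) {p q k k' : ℤ} (h : k = k') (h' : k' + 1 = k + 1)
    (y : TL U W p q k) :
    TLcast U W p q h' (TD α β p q k' (TLcast U W p q h y)) = TD α β p q k y := by
  subst h
  rfl

/-- The complex `T^k = ⊕_{r+s=k, r≥p, s≥q} Λ^r U ⊗ Λ^s W` with differential
`D = L_α + (-1)^r L_β` satisfies `D ∘ D = 0` and is exact in every degree
`k ≥ p + q + 1`, i.e. in all degrees strictly above its bottom degree `p + q`. -/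
theorem upper_symbol_complex_exact (U W : Type) [AddCommGroup U] [Module ℂ U]
    [AddCommGroup W] [Module ℂ W]
    (α : U) (β : W) (hα : α ≠ 0) (hβ : β ≠ 0) (p q : ℤ) (hp : 0 ≤ p) (hq : 0 ≤ q) :
    (∀ (k : ℤ) (x : TL U W p q k), TD α β p q (k + 1) (TD α β p q k x) = 0) ∧
    (∀ k : ℤ, p + q + 1 ≤ k → ∀ x : TL U W p q k, TD α β p q k x = 0 →
      ∃ y : TL U W p q (k - 1),
        TLcast U W p q (show k - 1 + 1 = k by omega) (TD α β p q (k - 1) y) = x) := by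
  refine ⟨fun k x => TD_TD hp hq α β x, fun k hk x hx => ?_⟩
  obtain ⟨m, rfl⟩ : ∃ m, k = m + 1 := ⟨k - 1, by omega⟩
  obtain ⟨y, rfl⟩ := exists_TD_eq_of_TD_eq_zero hp hq α β hα hβ (by omega) x hx
  exact ⟨TLcast U W p q (by omega) y, TLcast_TD_TLcast α β _ _ y⟩
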